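/- Let f : ℂ → ℂ be analytic on a neighborhood of a point z* with f(z*) = 0 and f'(z*) ≠ 0. Then there exist δ > 0 and a constant C ≥ 0 such that for every starting point z₀ with |z₀ − z*| < δ, the complex Weerakoon–Fernando iteration z_{n+1} = z_n − 2 f(z_n)/( f'(z_n) + f'(z_n − f(z_n)/f'(z_n)) ) is well defined (all denominators are nonzero), the sequence (z_n) converges to z*, and |z_{n+1} − z*| ≤ C |z_n − z*|³ for all n. -/

import Mathlib

/-!
Write `f x = (x - z*) u x` with `u = dslope f z*`, which is analytic at `z*` with
`u z* = f'(z*)`, so that `f' x = u x + (x - z*) u' x`. The Newton point `N x` then satisfies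
`N x - z* = (x - z*)² u'(x) / f'(x)`, and the WFM error is `(x - z*)(D x - 2 u x) / D x`, where
`D x = f'(x) + f'(N x) → 2 f'(z*)`. In
`D x - 2 u x = (x - z*)(u'(x) - u'(z*)) - (u x - u z* - (x - z*) u'(z*)) + (f'(N x) - f'(z*))`
every term is `O((x - z*)²)`, so the error is `O((x - z*)³)`. Close to `z*` this cubic bound
at least halves the distance to `z*`, which keeps the orbit near `z*` and drives it to `z*`.
-/

open Filter Asymptotics Metric Topology

section

variable {𝕜 : Type*} [NontriviallyNormedField 𝕜]

noncomputable def newtonStep (f : 𝕜 → 𝕜) (x : 𝕜) : 𝕜 := x - f x / deriv f x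

noncomputable def wfmDenom (f : 𝕜 → 𝕜) (x : 𝕜) : 𝕜 := deriv f x + deriv f (newtonStep f x)

noncomputable def wfmStep (f : 𝕜 → 𝕜) (x : 𝕜) : 𝕜 := x - 2 * f x / wfmDenom f x

variable {E : Type*} [NormedAddCommGroup E] [NormedSpace 𝕜 E]

theorem AnalyticAt.dslope {f : 𝕜 → E} {c : 𝕜} (hf : AnalyticAt 𝕜 f c) :
    AnalyticAt 𝕜 (dslope f c) c :=
  let ⟨_, hp⟩ := hf
  hp.has_fpower_series_dslope_fslope.analyticAt

theorem hasDerivAt_of_differentiableAt_dslope {f : 𝕜 → E} {c x : 𝕜}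
    (hu : DifferentiableAt 𝕜 (dslope f c) x) :
    HasDerivAt f (dslope f c x + (x - c) • deriv (dslope f c) x) x := by
  have hf : f = fun t => f c + (t - c) • dslope f c t :=
    funext fun t => by rw [sub_smul_dslope, add_sub_cancel]
  rw [hf]
  simpa [add_comm] using (((hasDerivAt_id x).sub_const c).smul hu.hasDerivAt).const_add (f c)

theorem AnalyticAt.isBigO_sub_sub_smul_deriv {f : 𝕜 → E} {c : 𝕜} (hf : AnalyticAt 𝕜 f c) :
    (fun x => f x - f c - (x - c) • deriv f c) =O[𝓝 c] fun x => (x - c) ^ 2 := by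
  have hslope := (isBigO_refl (fun x => x - c) (𝓝 c)).smul hf.dslope.differentiableAt.isBigO_sub
  refine (hslope.congr_left fun x => ?_).congr_right fun x => ?_
  · rw [smul_sub, sub_smul_dslope, dslope_same]
  · rw [smul_eq_mul, sq]

variable {f : 𝕜 → 𝕜} {c x : 𝕜}

theorem newtonStep_sub_eq (hroot : f c = 0) (hu : DifferentiableAt 𝕜 (dslope f c) x)
    (hx : deriv f x ≠ 0) :
    newtonStep f x - c = (x - c) ^ 2 * (deriv (dslope f c) x / deriv f x) := by
  have hfx : f x = (x - c) * dslope f c x := (sub_smul_dslope_of_zero hroot x).symm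
  have hdfx := (hasDerivAt_of_differentiableAt_dslope hu).deriv
  rw [smul_eq_mul] at hdfx
  rw [hdfx] at hx
  rw [newtonStep, hfx, hdfx]
  field_simp
  ring

theorem wfmStep_sub_eq (hroot : f c = 0) (hx : wfmDenom f x ≠ 0) :
    wfmStep f x - c = (x - c) * (wfmDenom f x - 2 * dslope f c x) * (wfmDenom f x)⁻¹ := by
  have hfx : f x = (x - c) * dslope f c x := (sub_smul_dslope_of_zero hroot x).symm
  rw [wfmStep, hfx]
  field_simp
  ring

end

section

variable {𝕜 : Type*} [NontriviallyNormedField 𝕜] [CompleteSpace 𝕜] {f : 𝕜 → 𝕜} {c : 𝕜}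

theorem isBigO_newtonStep_sub (hf : AnalyticAt 𝕜 f c) (hroot : f c = 0) (hsimple : deriv f c ≠ 0) :
    (fun x => newtonStep f x - c) =O[𝓝 c] fun x => (x - c) ^ 2 := by
  have hratio : Tendsto (fun x => deriv (dslope f c) x / deriv f x) (𝓝 c)
      (𝓝 (deriv (dslope f c) c / deriv f c)) :=
    hf.dslope.deriv.continuousAt.tendsto.div hf.deriv.continuousAt.tendsto hsimple
  have heq : (fun x => newtonStep f x - c) =ᶠ[𝓝 c]
      fun x => (x - c) ^ 2 * (deriv (dslope f c) x / deriv f x) := by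
    filter_upwards [hf.dslope.eventually_analyticAt, hf.deriv.continuousAt.eventually_ne hsimple]
      with x hu hx using newtonStep_sub_eq hroot hu.differentiableAt hx
  exact heq.trans_isBigO
    (((isBigO_refl _ _).mul (hratio.isBigO_one 𝕜)).congr_right fun x => mul_one _)

theorem tendsto_newtonStep (hf : AnalyticAt 𝕜 f c) (hroot : f c = 0) (hsimple : deriv f c ≠ 0) :
    Tendsto (newtonStep f) (𝓝 c) (𝓝 c) := by
  have hsq : Tendsto (fun x => (x - c) ^ 2) (𝓝 c) (𝓝 0) := by
    simpa using ((tendsto_id (x := 𝓝 c)).sub_const c).pow 2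
  exact tendsto_sub_nhds_zero_iff.1 ((isBigO_newtonStep_sub hf hroot hsimple).trans_tendsto hsq)

theorem isBigO_wfmDenom_sub (hf : AnalyticAt 𝕜 f c) (hroot : f c = 0) (hsimple : deriv f c ≠ 0) :
    (fun x => wfmDenom f x - 2 * dslope f c x) =O[𝓝 c] fun x => (x - c) ^ 2 := by
  set u := dslope f c
  have hu := hf.dslope
  have hdu : (fun x => (x - c) * (deriv u x - deriv u c)) =O[𝓝 c] fun x => (x - c) ^ 2 :=
    ((isBigO_refl _ _).mul hu.deriv.differentiableAt.isBigO_sub).congr_right fun x => (sq _).symm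
  have htaylor : (fun x => u x - u c - (x - c) * deriv u c) =O[𝓝 c] fun x => (x - c) ^ 2 := by
    simpa only [smul_eq_mul] using hu.isBigO_sub_sub_smul_deriv
  have hnewton : (fun x => deriv f (newtonStep f x) - deriv f c) =O[𝓝 c] fun x => (x - c) ^ 2 :=
    (hf.deriv.differentiableAt.isBigO_sub.comp_tendsto (tendsto_newtonStep hf hroot hsimple)).trans
      (isBigO_newtonStep_sub hf hroot hsimple)
  refine EventuallyEq.trans_isBigO ?_ ((hdu.sub htaylor).add hnewton)
  filter_upwards [hu.eventually_analyticAt] with x hux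
  have hdfx := (hasDerivAt_of_differentiableAt_dslope hux.differentiableAt).deriv
  simp only [smul_eq_mul] at hdfx
  simp only [wfmDenom, hdfx, u, dslope_same]
  ring

theorem tendsto_wfmDenom (hf : AnalyticAt 𝕜 f c) (hroot : f c = 0) (hsimple : deriv f c ≠ 0) :
    Tendsto (wfmDenom f) (𝓝 c) (𝓝 (2 * deriv f c)) := by
  rw [two_mul]
  exact hf.deriv.continuousAt.tendsto.add
    (hf.deriv.continuousAt.tendsto.comp (tendsto_newtonStep hf hroot hsimple))

variable [CharZero 𝕜]

theorem eventually_wfmDenom_ne_zero (hf : AnalyticAt 𝕜 f c) (hroot : f c = 0)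
    (hsimple : deriv f c ≠ 0) : ∀ᶠ x in 𝓝 c, wfmDenom f x ≠ 0 :=
  (tendsto_wfmDenom hf hroot hsimple).eventually_ne (mul_ne_zero two_ne_zero hsimple)

theorem isBigO_wfmStep_sub (hf : AnalyticAt 𝕜 f c) (hroot : f c = 0) (hsimple : deriv f c ≠ 0) :
    (fun x => wfmStep f x - c) =O[𝓝 c] fun x => (x - c) ^ 3 := by
  have hinv : Tendsto (fun x => (wfmDenom f x)⁻¹) (𝓝 c) (𝓝 (2 * deriv f c)⁻¹) :=
    (tendsto_wfmDenom hf hroot hsimple).inv₀ (mul_ne_zero two_ne_zero hsimple)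
  have hprod := ((isBigO_refl (fun x => x - c) _).mul (isBigO_wfmDenom_sub hf hroot hsimple)).mul
    (hinv.isBigO_one 𝕜)
  refine EventuallyEq.trans_isBigO ?_ (hprod.congr_right fun x => by ring)
  filter_upwards [eventually_wfmDenom_ne_zero hf hroot hsimple] with x hx
    using wfmStep_sub_eq hroot hx

end

theorem tendsto_of_dist_map_le_half {X : Type*} [PseudoMetricSpace X] {T : X → X} {a : X}
    {δ : ℝ} (hT : ∀ x ∈ ball a δ, dist (T x) a ≤ dist x a / 2) {z : ℕ → X}
    (hz : ∀ n, z (n + 1) = T (z n)) (h0 : z 0 ∈ ball a δ) :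
    (∀ n, z n ∈ ball a δ) ∧ Tendsto z atTop (𝓝 a) := by
  have hgeom : ∀ n, z n ∈ ball a δ ∧ dist (z n) a ≤ (1 / 2) ^ n * dist (z 0) a := by
    intro n
    induction n with
    | zero => simpa using h0
    | succ n ih =>
      have hstep : dist (z (n + 1)) a ≤ dist (z n) a / 2 := hz n ▸ hT _ ih.1
      have hpos := dist_nonneg (x := z n) (y := a)
      refine ⟨lt_of_le_of_lt hstep (by linarith [mem_ball.1 ih.1]), ?_⟩
      rw [pow_succ]
      linarith [ih.2]
  refine ⟨fun n => (hgeom n).1, tendsto_iff_dist_tendsto_zero.2 ?_⟩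
  have hlim : Tendsto (fun n : ℕ => (1 / 2 : ℝ) ^ n * dist (z 0) a) atTop (𝓝 0) := by
    simpa using (tendsto_pow_atTop_nhds_zero_of_lt_one (by norm_num : (0 : ℝ) ≤ 1 / 2)
      (by norm_num)).mul_const (dist (z 0) a)
  exact squeeze_zero (fun _ => dist_nonneg) (fun n => (hgeom n).2) hlim

/-- **Weerakoon–Fernando method, complex case.** If `f : ℂ → ℂ` is analytic on a
neighborhood of a simple root `z*` (with `f z* = 0` and `deriv f z* ≠ 0`), then there are
`δ > 0` and `C ≥ 0` such that from any starting point `z₀` with `|z₀ - z*| < δ`, the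
complex WFM iteration
`z_{n+1} = z_n - 2 f(z_n) / (f'(z_n) + f'(z_n - f(z_n)/f'(z_n)))`
is well defined (all denominators nonzero), converges to `z*`, and satisfies
`|z_{n+1} - z*| ≤ C |z_n - z*|³` for all `n`. -/
theorem wfm_complex_cubic_convergence
    (f : ℂ → ℂ) (zs : ℂ) (hf : AnalyticAt ℂ f zs)
    (hroot : f zs = 0) (hsimple : deriv f zs ≠ 0) :
    ∃ δ > 0, ∃ C ≥ (0 : ℝ), ∀ z₀ : ℂ, ‖z₀ - zs‖ < δ →
      ∀ z : ℕ → ℂ, z 0 = z₀ →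
        (∀ n, z (n + 1) =
          z n - 2 * f (z n) /
            (deriv f (z n) + deriv f (z n - f (z n) / deriv f (z n)))) →
        (∀ n, deriv f (z n) ≠ 0 ∧
            deriv f (z n) + deriv f (z n - f (z n) / deriv f (z n)) ≠ 0) ∧
        Tendsto z atTop (nhds zs) ∧
        (∀ n, ‖z (n + 1) - zs‖ ≤ C * ‖z n - zs‖ ^ 3) := by
  obtain ⟨C, hC0, hC⟩ := (isBigO_wfmStep_sub hf hroot hsimple).exists_nonneg
  have hsmall : Tendsto (fun x => C * ‖x - zs‖ ^ 2) (𝓝 zs) (𝓝 0) := by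
    simpa using ((tendsto_id (x := 𝓝 zs)).sub_const zs).norm.pow 2 |>.const_mul C
  have hnear : ∀ᶠ x in 𝓝 zs, deriv f x ≠ 0 ∧ wfmDenom f x ≠ 0 ∧
      ‖wfmStep f x - zs‖ ≤ C * ‖x - zs‖ ^ 3 ∧ C * ‖x - zs‖ ^ 2 ≤ 1 / 2 := by
    filter_upwards [hf.deriv.continuousAt.eventually_ne hsimple,
      eventually_wfmDenom_ne_zero hf hroot hsimple, hC.bound,
      hsmall.eventually (ge_mem_nhds one_half_pos)] with x hderiv hdenom hcubic hcontr
    exact ⟨hderiv, hdenom, by simpa using hcubic, hcontr⟩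
  obtain ⟨δ, hδ, hball⟩ := eventually_nhds_iff_ball.1 hnear
  refine ⟨δ, hδ, C, hC0, fun z₀ hz₀ z hz0 hrec => ?_⟩
  have hhalf : ∀ x ∈ ball zs δ, dist (wfmStep f x) zs ≤ dist x zs / 2 := fun x hx => by
    obtain ⟨-, -, hcubic, hcontr⟩ := hball x hx
    rw [dist_eq_norm, dist_eq_norm]
    calc ‖wfmStep f x - zs‖ ≤ C * ‖x - zs‖ ^ 2 * ‖x - zs‖ := hcubic.trans_eq (by ring)
      _ ≤ 1 / 2 * ‖x - zs‖ := by gcongr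
      _ = ‖x - zs‖ / 2 := by ring
  obtain ⟨hmem, hlim⟩ := tendsto_of_dist_map_le_half hhalf hrec (by rwa [mem_ball_iff_norm, hz0])
  refine ⟨fun n => ⟨(hball _ (hmem n)).1, (hball _ (hmem n)).2.1⟩, hlim, fun n => ?_⟩
  rw [hrec n]
  exact (hball _ (hmem n)).2.2.1
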